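/- Fix a root α and a subset X ⊆ [1,|s|]. Define γ ∼_α^X δ on galleries of type s to mean: γ_i ≠ δ_i implies both β_i(γ) = ±α and i ∈ X. Then γ ∼_α^X δ holds if and only if δ = f_{i_n}⋯f_{i_1} γ for some indices i_1,…,i_n ∈ X such that for each k, β_{i_k}(f_{i_{k-1}}⋯f_{i_1} γ) = ±α. -/

import Mathlib

/-!
Folding at position `i` leaves the prefixes `γ^k` with `k ≤ i` alone and multiplies those with
`k > i` on the left by the reflection `s_{β_i(γ)} = γ^i s_{α_i} (γ^i)⁻¹`; hence it leaves `β_j` for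
`j < i` unchanged and applies `s_{β_i(γ)}` to `β_j` for `j ≥ i`. When `β_i(γ) = ±a` this reflection
swaps `a` and `-a`, so a fold at such a position does not change which `β_j` equal `±a`. Therefore
`∼_a^X` is unchanged by folding at a position of `X` whose wall is `L_a`: this gives one
implication by induction along the list of folds, and the other by folding the positions where
`γ` and `δ` differ, one at a time.
-/

section GallerySetup

variable {W : Type} [Group W] {E : Type} [AddCommGroup E] [DistribMulAction W E]

/-- The Weyl-group element contributed by position `i` of a combinatorial gallery:
`s_{α_i}` if the gallery crosses the wall there (`γ i = true`), and `e` otherwise. -/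
def galElt (s : E → W) {r : ℕ} (α : Fin r → E) (γ : Fin r → Bool) (i : Fin r) : W :=
  if γ i then s (α i) else 1

/-- `γ^k = γ₁ ⋯ γ_k`, the product of the first `k` entries of the gallery. -/
def gpref (s : E → W) {r : ℕ} (α : Fin r → E) (γ : Fin r → Bool) (k : ℕ) : W :=
  (((List.finRange r).take k).map (galElt s α γ)).prod

/-- `β_i(γ) = γ^i (-α_i)` (here `i : Fin r` is the 0-based index of the paper's `i+1`). -/
def gbeta (s : E → W) {r : ℕ} (α : Fin r → E) (γ : Fin r → Bool) (i : Fin r) : E :=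
  gpref s α γ (i.val + 1) • (-(α i))

/-- The folding operator at position `i`: it replaces `γ_i` by `γ_i s_i`. -/
def gfold {r : ℕ} (γ : Fin r → Bool) (i : Fin r) : Fin r → Bool :=
  Function.update γ i (!(γ i))

end GallerySetup

theorem List.forall_eq_append_cons_foldl_cons_iff {α β : Type*} (f : β → α → β)
    (P : β → α → Prop) (b : β) (j : α) (l : List α) :
    (∀ l₁ i l₂, j :: l = l₁ ++ i :: l₂ → P (l₁.foldl f b) i) ↔
      P b j ∧ ∀ l₁ i l₂, l = l₁ ++ i :: l₂ → P (l₁.foldl f (f b j)) i := by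
  constructor
  · intro h
    exact ⟨h [] j l rfl, fun l₁ i l₂ e => h (j :: l₁) i l₂ (by rw [e, List.cons_append])⟩
  · rintro ⟨hj, hl⟩ (_ | ⟨k, l₁⟩) i l₂ e
    · obtain ⟨rfl, -⟩ := List.cons.inj e
      exact hj
    · simp only [List.cons_append, List.cons.injEq] at e
      obtain ⟨rfl, e⟩ := e
      exact hl l₁ i l₂ e

theorem smul_eq_or_eq_neg_iff {G E : Type*} [Group G] [AddGroup E] [DistribMulAction G E]
    {w : G} {a : E} (hw : w • a = -a) (b : E) :
    (w • b = a ∨ w • b = -a) ↔ (b = a ∨ b = -a) := by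
  have hw' : w • -a = a := by rw [smul_neg, hw, neg_neg]
  have h₁ : w • b = a ↔ b = -a := by rw [← smul_left_cancel_iff w (x := b) (y := -a), hw']
  have h₂ : w • b = -a ↔ b = a := by rw [← smul_left_cancel_iff w (x := b) (y := a), hw]
  rw [h₁, h₂, or_comm]

section Gallery

variable {W : Type} [Group W] {E : Type} (s : E → W) {r : ℕ} (α : Fin r → E)

theorem gfold_apply_ne {γ : Fin r → Bool} {i j : Fin r} (hji : j ≠ i) : gfold γ i j = γ j :=
  Function.update_of_ne hji _ _

theorem gfold_apply_self_of_ne {γ δ : Fin r → Bool} {i : Fin r} (hi : γ i ≠ δ i) :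
    gfold γ i i = δ i := by
  rw [gfold, Function.update_self, Bool.eq_not_of_ne hi, Bool.not_not]

theorem gpref_succ (γ : Fin r → Bool) {k : ℕ} (hk : k < r) :
    gpref s α γ (k + 1) = gpref s α γ k * galElt s α γ ⟨k, hk⟩ := by
  simp [gpref, List.take_add_one, hk]

theorem gpref_congr {γ γ' : Fin r → Bool} {k : ℕ} (h : ∀ j : Fin r, j.val < k → γ j = γ' j) :
    gpref s α γ k = gpref s α γ' k := by
  refine congrArg List.prod (List.map_congr_left fun j hj => ?_)
  obtain ⟨m, hm, rfl⟩ := List.mem_take_iff_getElem.mp hj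
  have hmk : ((List.finRange r)[m]).val < k := by simp; omega
  rw [galElt, galElt, h _ hmk]

theorem gpref_gfold_of_le (γ : Fin r → Bool) {i : Fin r} {k : ℕ} (hk : k ≤ i.val) :
    gpref s α (gfold γ i) k = gpref s α γ k :=
  gpref_congr s α fun j hj => gfold_apply_ne (by omega)

theorem gpref_gfold_succ_self (hsq : ∀ b : E, s b * s b = 1) (γ : Fin r → Bool) (i : Fin r) :
    gpref s α (gfold γ i) (i.val + 1) = gpref s α γ (i.val + 1) * s (α i) := by
  rw [gpref_succ s α _ i.isLt, gpref_succ s α _ i.isLt, gpref_gfold_of_le s α γ le_rfl,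
    mul_assoc]
  cases h : γ i <;> simp [galElt, gfold, h, hsq]

variable [AddCommGroup E] [DistribMulAction W E]

theorem s_gbeta_mul_gpref (hconj : ∀ (u : W) (b : E), s (u • b) = u * s b * u⁻¹)
    (hneg : ∀ b : E, s (-b) = s b) (γ : Fin r → Bool) (i : Fin r) :
    s (gbeta s α γ i) * gpref s α γ (i.val + 1) = gpref s α γ (i.val + 1) * s (α i) := by
  rw [gbeta, hconj, hneg, inv_mul_cancel_right]

theorem gpref_gfold_of_lt (hconj : ∀ (u : W) (b : E), s (u • b) = u * s b * u⁻¹)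
    (hneg : ∀ b : E, s (-b) = s b) (hsq : ∀ b : E, s b * s b = 1)
    (γ : Fin r → Bool) {i : Fin r} {k : ℕ} (hik : i.val < k) (hkr : k ≤ r) :
    gpref s α (gfold γ i) k = s (gbeta s α γ i) * gpref s α γ k := by
  induction k, hik using Nat.le_induction with
  | base => rw [gpref_gfold_succ_self s α hsq, s_gbeta_mul_gpref s α hconj hneg]
  | succ k hik ih =>
    have hk : k < r := by omega
    have hki : (⟨k, hk⟩ : Fin r) ≠ i := Fin.ne_of_val_ne (show k ≠ i.val by omega)
    rw [gpref_succ s α _ hk, gpref_succ s α _ hk, ih hk.le, mul_assoc, galElt, galElt,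
      gfold_apply_ne hki]

theorem gbeta_gfold_of_lt (γ : Fin r → Bool) {i j : Fin r} (hji : j.val < i.val) :
    gbeta s α (gfold γ i) j = gbeta s α γ j := by
  rw [gbeta, gpref_gfold_of_le s α γ hji, gbeta]

theorem gbeta_gfold_of_le (hconj : ∀ (u : W) (b : E), s (u • b) = u * s b * u⁻¹)
    (hneg : ∀ b : E, s (-b) = s b) (hsq : ∀ b : E, s b * s b = 1)
    (γ : Fin r → Bool) {i j : Fin r} (hij : i.val ≤ j.val) :
    gbeta s α (gfold γ i) j = s (gbeta s α γ i) • gbeta s α γ j := by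
  rw [gbeta, gpref_gfold_of_lt s α hconj hneg hsq γ (Nat.lt_succ_of_le hij) j.isLt, mul_smul]
  rfl

theorem s_gbeta_smul_self (hconj : ∀ (u : W) (b : E), s (u • b) = u * s b * u⁻¹)
    (hneg : ∀ b : E, s (-b) = s b) (hsa : ∀ j : Fin r, s (α j) • α j = -(α j))
    (γ : Fin r → Bool) (i : Fin r) :
    s (gbeta s α γ i) • gbeta s α γ i = -gbeta s α γ i := by
  rw [gbeta, hconj, hneg, mul_smul, mul_smul, inv_smul_smul, smul_neg, smul_neg, hsa, smul_neg]

theorem gbeta_gfold_eq_or_eq_neg_iff (hconj : ∀ (u : W) (b : E), s (u • b) = u * s b * u⁻¹)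
    (hneg : ∀ b : E, s (-b) = s b) (hsq : ∀ b : E, s b * s b = 1)
    (hsa : ∀ j : Fin r, s (α j) • α j = -(α j)) {a : E} {γ : Fin r → Bool} {i : Fin r}
    (hi : gbeta s α γ i = a ∨ gbeta s α γ i = -a) (j : Fin r) :
    (gbeta s α (gfold γ i) j = a ∨ gbeta s α (gfold γ i) j = -a) ↔
      (gbeta s α γ j = a ∨ gbeta s α γ j = -a) := by
  rcases lt_or_ge j.val i.val with hji | hij
  · rw [gbeta_gfold_of_lt s α γ hji]
  · have hrefl : s (gbeta s α γ i) • a = -a := by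
      have h := s_gbeta_smul_self s α hconj hneg hsa γ i
      rcases hi with hi | hi <;> rw [hi] at h ⊢
      · exact h
      · rw [hneg] at h ⊢
        rwa [smul_neg, neg_inj] at h
    rw [gbeta_gfold_of_le s α hconj hneg hsq γ hij, smul_eq_or_eq_neg_iff hrefl]

def SimRel (a : E) (X : Set (Fin r)) (γ δ : Fin r → Bool) : Prop :=
  ∀ i : Fin r, γ i ≠ δ i → (gbeta s α γ i = a ∨ gbeta s α γ i = -a) ∧ i ∈ X

def IsFoldingSeq (a : E) (γ : Fin r → Bool) (l : List (Fin r)) : Prop :=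
  ∀ (l₁ : List (Fin r)) (i : Fin r) (l₂ : List (Fin r)), l = l₁ ++ i :: l₂ →
    gbeta s α (l₁.foldl gfold γ) i = a ∨ gbeta s α (l₁.foldl gfold γ) i = -a

variable {s α} {a : E} {X : Set (Fin r)}

theorem isFoldingSeq_nil (γ : Fin r → Bool) : IsFoldingSeq s α a γ [] := by
  simp [IsFoldingSeq]

theorem isFoldingSeq_cons_iff {γ : Fin r → Bool} {j : Fin r} {l : List (Fin r)} :
    IsFoldingSeq s α a γ (j :: l) ↔
      (gbeta s α γ j = a ∨ gbeta s α γ j = -a) ∧ IsFoldingSeq s α a (gfold γ j) l :=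
  List.forall_eq_append_cons_foldl_cons_iff gfold
    (fun γ i => gbeta s α γ i = a ∨ gbeta s α γ i = -a) γ j l

theorem SimRel.refl (γ : Fin r → Bool) : SimRel s α a X γ γ :=
  fun _ h => absurd rfl h

theorem SimRel.of_gfold (hconj : ∀ (u : W) (b : E), s (u • b) = u * s b * u⁻¹)
    (hneg : ∀ b : E, s (-b) = s b) (hsq : ∀ b : E, s b * s b = 1)
    (hsa : ∀ j : Fin r, s (α j) • α j = -(α j)) {γ δ : Fin r → Bool} {j : Fin r}
    (hj : gbeta s α γ j = a ∨ gbeta s α γ j = -a) (hjX : j ∈ X)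
    (h : SimRel s α a X (gfold γ j) δ) : SimRel s α a X γ δ := by
  intro i hi
  by_cases hij : i = j
  · subst hij
    exact ⟨hj, hjX⟩
  · obtain ⟨hb, hiX⟩ := h i (by rwa [gfold_apply_ne hij])
    exact ⟨(gbeta_gfold_eq_or_eq_neg_iff s α hconj hneg hsq hsa hj i).mp hb, hiX⟩

theorem SimRel.gfold (hconj : ∀ (u : W) (b : E), s (u • b) = u * s b * u⁻¹)
    (hneg : ∀ b : E, s (-b) = s b) (hsq : ∀ b : E, s b * s b = 1)
    (hsa : ∀ j : Fin r, s (α j) • α j = -(α j)) {γ δ : Fin r → Bool} {j : Fin r}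
    (h : SimRel s α a X γ δ) (hj : γ j ≠ δ j) : SimRel s α a X (gfold γ j) δ := by
  intro i hi
  have hij : i ≠ j := by rintro rfl; exact hi (gfold_apply_self_of_ne hj)
  obtain ⟨hb, hiX⟩ := h i (by rwa [gfold_apply_ne hij] at hi)
  exact ⟨(gbeta_gfold_eq_or_eq_neg_iff s α hconj hneg hsq hsa (h j hj).1 i).mpr hb, hiX⟩

theorem simRel_foldl (hconj : ∀ (u : W) (b : E), s (u • b) = u * s b * u⁻¹)
    (hneg : ∀ b : E, s (-b) = s b) (hsq : ∀ b : E, s b * s b = 1)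
    (hsa : ∀ j : Fin r, s (α j) • α j = -(α j)) (l : List (Fin r)) (γ : Fin r → Bool)
    (hX : ∀ i ∈ l, i ∈ X) (hl : IsFoldingSeq s α a γ l) :
    SimRel s α a X γ (l.foldl gfold γ) := by
  induction l generalizing γ with
  | nil => exact SimRel.refl γ
  | cons j l ih =>
    rw [List.forall_mem_cons] at hX
    rw [isFoldingSeq_cons_iff] at hl
    exact (ih (gfold γ j) hX.2 hl.2).of_gfold hconj hneg hsq hsa hl.1 hX.1

theorem exists_foldl_of_simRel (hconj : ∀ (u : W) (b : E), s (u • b) = u * s b * u⁻¹)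
    (hneg : ∀ b : E, s (-b) = s b) (hsq : ∀ b : E, s b * s b = 1)
    (hsa : ∀ j : Fin r, s (α j) • α j = -(α j)) {γ δ : Fin r → Bool}
    (h : SimRel s α a X γ δ) :
    ∃ l : List (Fin r), (∀ i ∈ l, i ∈ X) ∧ δ = l.foldl gfold γ ∧ IsFoldingSeq s α a γ l := by
  classical
  obtain ⟨D, hD⟩ : ∃ D : Finset (Fin r), ∀ i, γ i ≠ δ i ↔ i ∈ D :=
    ⟨Finset.univ.filter (fun i => γ i ≠ δ i), by simp⟩
  induction D using Finset.induction_on generalizing γ with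
  | empty =>
    refine ⟨[], by simp, funext fun i => ?_, isFoldingSeq_nil γ⟩
    simpa [eq_comm] using hD i
  | insert j D hjD ih =>
    have hj : γ j ≠ δ j := (hD j).mpr (Finset.mem_insert_self j D)
    have hD' : ∀ i, gfold γ j i ≠ δ i ↔ i ∈ D := by
      intro i
      by_cases hij : i = j
      · subst hij
        simp [gfold_apply_self_of_ne hj, hjD]
      · rw [gfold_apply_ne hij, hD i, Finset.mem_insert, or_iff_right hij]
    obtain ⟨l, hlX, hδ, hl⟩ := ih (h.gfold hconj hneg hsq hsa hj) hD'
    exact ⟨j :: l, List.forall_mem_cons.mpr ⟨(h j hj).2, hlX⟩, hδ,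
      isFoldingSeq_cons_iff.mpr ⟨(h j hj).1, hl⟩⟩

end Gallery

/-- Characterization of the relation `∼_α^X` (γ and δ differ only at places of `X` whose
wall is `L_α`): `γ ∼_a^X δ` holds if and only if `δ = f_{i_n} ⋯ f_{i_1} γ` for some
indices `i_1, …, i_n ∈ X` such that at each step `β_{i_k}(f_{i_{k-1}} ⋯ f_{i_1} γ) = ±a`.
Foldings are applied left-to-right along the list `[i_1, …, i_n]`. -/
theorem stmt8 {W : Type} [Group W] {E : Type} [AddCommGroup E] [DistribMulAction W E]
    (s : E → W) {r : ℕ} (α : Fin r → E) (a : E) (X : Set (Fin r))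
    (γ δ : Fin r → Bool)
    (hconj : ∀ (u : W) (b : E), s (u • b) = u * s b * u⁻¹)
    (hneg : ∀ b : E, s (-b) = s b)
    (hsq : ∀ b : E, s b * s b = 1)
    (hsa : ∀ j : Fin r, s (α j) • α j = -(α j)) :
    (∀ i : Fin r, γ i ≠ δ i →
        (gbeta s α γ i = a ∨ gbeta s α γ i = -a) ∧ i ∈ X) ↔
    ∃ l : List (Fin r), (∀ i ∈ l, i ∈ X) ∧ δ = l.foldl gfold γ ∧
      ∀ (l₁ : List (Fin r)) (i : Fin r) (l₂ : List (Fin r)), l = l₁ ++ i :: l₂ →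
        gbeta s α (l₁.foldl gfold γ) i = a ∨ gbeta s α (l₁.foldl gfold γ) i = -a := by
  refine ⟨exists_foldl_of_simRel hconj hneg hsq hsa, ?_⟩
  rintro ⟨l, hX, rfl, hl⟩
  exact simRel_foldl hconj hneg hsq hsa l γ hX hl
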